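/- arXiv:2304.01032 — 7 statements merged into one kernel-verified Lean document; each statement's English description precedes it below -/
import Mathlib

section
/- For all real x with 0 ≤ x ≤ 2, sin(x) ≥ x·e^{−x²/3}. -/
/-! The two factors are compared with their Taylor polynomials: `x - x ^ 3 / 6 ≤ sin x`, and
`exp (-t) ≤ 1 - t / 2` for `t = x ^ 2 / 3`, which follows from `1 + t + t ^ 2 / 2 ≤ exp t`
as long as `t ^ 2 ≤ 2`; on `[0, 2]` we have `t ≤ 4 / 3`. -/

open Real

lemma Real.exp_neg_le_one_sub_half {t : ℝ} (ht : 0 ≤ t) (ht2 : t ^ 2 ≤ 2) :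
    exp (-t) ≤ 1 - t / 2 := by
  have hfactor : 0 ≤ 1 - t / 2 := by nlinarith
  have hprod : 1 ≤ (1 - t / 2) * exp t :=
    calc 1 ≤ (1 - t / 2) * (1 + t + t ^ 2 / 2) := by nlinarith
      _ ≤ (1 - t / 2) * exp t :=
        mul_le_mul_of_nonneg_left (quadratic_le_exp_of_nonneg ht) hfactor
  rwa [exp_neg, inv_le_iff_one_le_mul₀ (exp_pos t)]

theorem sin_ge (x : ℝ) (h0 : 0 ≤ x) (h2 : x ≤ 2) :
    x * Real.exp (-x ^ 2 / 3) ≤ Real.sin x := by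
  have hsq : x ^ 2 ≤ 4 := by nlinarith
  have hexp : exp (-x ^ 2 / 3) ≤ 1 - x ^ 2 / 6 := by
    have := exp_neg_le_one_sub_half (t := x ^ 2 / 3) (by positivity)
      (by nlinarith [sq_nonneg x])
    rw [neg_div]
    linarith
  calc x * exp (-x ^ 2 / 3) ≤ x * (1 - x ^ 2 / 6) := mul_le_mul_of_nonneg_left hexp h0
    _ = x - x ^ 3 / 6 := by ring
    _ ≤ sin x := sin_ge_sub_cube h0
end

section
/- For all real x with |x| ≤ 1, cos(x) ≥ e^{−γx²}, where γ = −log(cos 1). -/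
open Real Set

lemma cos_pos_abs {y : ℝ} (h : |y| ≤ 1) : 0 < Real.cos y := by
  apply Real.cos_pos_of_mem_Ioo
  have h1 := abs_le.1 h
  have h2 := Real.pi_gt_three
  constructor <;> [linarith [h1.1]; linarith [h1.2]]

lemma hasDerivAt_p {y : ℝ} (hy : |y| ≤ 1) :
    HasDerivAt (fun z => z * Real.tan z + 2 * Real.log (Real.cos z))
      (1 * Real.tan y + y * (1 / Real.cos y ^ 2) + 2 * ((Real.cos y)⁻¹ * (-Real.sin y))) y := by
  have hc : Real.cos y ≠ 0 := (cos_pos_abs hy).ne'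
  exact ((hasDerivAt_id y).mul (Real.hasDerivAt_tan hc)).add
    (((Real.hasDerivAt_log hc).comp y (Real.hasDerivAt_cos y)).const_mul 2)

lemma p_nonneg : ∀ y ∈ Icc (0:ℝ) 1, 0 ≤ y * Real.tan y + 2 * Real.log (Real.cos y) := by
  intro y hy
  have habs : ∀ z ∈ Icc (0:ℝ) 1, |z| ≤ 1 := by
    intro z hz; rw [abs_le]; exact ⟨by linarith [hz.1], hz.2⟩
  have hmono : MonotoneOn (fun z => z * Real.tan z + 2 * Real.log (Real.cos z)) (Icc (0:ℝ) 1) := by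
    apply monotoneOn_of_deriv_nonneg (convex_Icc 0 1)
    · intro z hz
      exact (hasDerivAt_p (habs z hz)).continuousAt.continuousWithinAt
    · intro z hz
      rw [interior_Icc] at hz
      exact ((hasDerivAt_p (habs z (Ioo_subset_Icc_self hz))).differentiableAt).differentiableWithinAt
    · intro z hz
      rw [interior_Icc] at hz
      have hz' := habs z (Ioo_subset_Icc_self hz)
      rw [(hasDerivAt_p hz').deriv]
      have hc : 0 < Real.cos z := cos_pos_abs hz'
      have hs : 0 ≤ Real.sin z := Real.sin_nonneg_of_nonneg_of_le_pi (le_of_lt hz.1)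
        (by linarith [hz.2, Real.pi_gt_three])
      have hsz : Real.sin z ≤ z := Real.sin_le (le_of_lt hz.1)
      have hc1 : Real.cos z ≤ 1 := Real.cos_le_one z
      have key : 1 * Real.tan z + z * (1 / Real.cos z ^ 2) + 2 * ((Real.cos z)⁻¹ * (-Real.sin z))
          = (z - Real.sin z * Real.cos z) / Real.cos z ^ 2 := by
        rw [Real.tan_eq_sin_div_cos]; field_simp; ring
      rw [key]
      apply div_nonneg _ (by positivity)
      nlinarith
  have h0 : (fun z => z * Real.tan z + 2 * Real.log (Real.cos z)) 0 = 0 := by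
    simp [Real.tan_zero]
  have := hmono (left_mem_Icc.2 zero_le_one) hy hy.1
  rw [h0] at this
  exact this

lemma G_ge {a : ℝ} (ha : 0 < a) (ha1 : a ≤ 1) :
    Real.log (Real.cos 1) ≤ Real.log (Real.cos a) / a ^ 2 := by
  have habs : ∀ z ∈ Icc a 1, |z| ≤ 1 := by
    intro z hz; rw [abs_le]; exact ⟨by linarith [hz.1], hz.2⟩
  have hderiv : ∀ z ∈ Icc a 1, HasDerivAt (fun y => Real.log (Real.cos y) / y ^ 2)
      (((Real.cos z)⁻¹ * (-Real.sin z) * z ^ 2 - Real.log (Real.cos z) * (↑2 * z ^ 1)) / (z ^ 2) ^ 2) z := by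
    intro z hz
    have hc : Real.cos z ≠ 0 := (cos_pos_abs (habs z hz)).ne'
    have hz0 : z ^ 2 ≠ 0 := pow_ne_zero _ (by linarith [hz.1] : (0:ℝ) < z).ne'
    exact ((Real.hasDerivAt_log hc).comp z (Real.hasDerivAt_cos z)).div (hasDerivAt_pow 2 z) hz0
  have hanti : AntitoneOn (fun y => Real.log (Real.cos y) / y ^ 2) (Icc a 1) := by
    apply antitoneOn_of_deriv_nonpos (convex_Icc a 1)
    · intro z hz
      exact (hderiv z hz).continuousAt.continuousWithinAt
    · intro z hz
      rw [interior_Icc] at hz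
      exact ((hderiv z (Ioo_subset_Icc_self hz)).differentiableAt).differentiableWithinAt
    · intro z hz
      rw [interior_Icc] at hz
      have hz' := Ioo_subset_Icc_self hz
      rw [(hderiv z hz').deriv]
      have hc : 0 < Real.cos z := cos_pos_abs (habs z hz')
      have hz0 : 0 < z := lt_of_lt_of_le ha hz'.1
      have hp := p_nonneg z ⟨le_of_lt hz0, hz'.2⟩
      apply div_nonpos_of_nonpos_of_nonneg _ (by positivity)
      have : (Real.cos z)⁻¹ * (-Real.sin z) * z ^ 2 - Real.log (Real.cos z) * (↑2 * z ^ 1)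
          = -z * (z * Real.tan z + 2 * Real.log (Real.cos z)) := by
        rw [Real.tan_eq_sin_div_cos]; field_simp; ring
      rw [this]
      have : 0 ≤ z * (z * Real.tan z + 2 * Real.log (Real.cos z)) := mul_nonneg (le_of_lt hz0) hp
      linarith
  have := hanti ⟨le_refl a, ha1⟩ (right_mem_Icc.2 ha1) ha1
  simpa using this

theorem cos_ge (x : ℝ) (hx : |x| ≤ 1) :
    Real.exp (-(-Real.log (Real.cos 1)) * x ^ 2) ≤ Real.cos x := by
  rcases eq_or_ne x 0 with h0 | h0
  · simp [h0]
  · have ha : 0 < |x| := abs_pos.2 h0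
    have hG := G_ge ha hx
    have hsq : |x| ^ 2 = x ^ 2 := sq_abs x
    have hc : 0 < Real.cos |x| := cos_pos_abs (by rwa [abs_abs])
    have hlog : Real.log (Real.cos 1) * x ^ 2 ≤ Real.log (Real.cos |x|) := by
      rw [← hsq]
      have h2 : 0 < |x| ^ 2 := by positivity
      calc Real.log (Real.cos 1) * |x| ^ 2
          ≤ (Real.log (Real.cos |x|) / |x| ^ 2) * |x| ^ 2 := by
            exact mul_le_mul_of_nonneg_right hG (le_of_lt h2)
        _ = Real.log (Real.cos |x|) := by field_simp
    calc Real.exp (-(-Real.log (Real.cos 1)) * x ^ 2)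
        = Real.exp (Real.log (Real.cos 1) * x ^ 2) := by ring_nf
      _ ≤ Real.exp (Real.log (Real.cos |x|)) := Real.exp_le_exp.2 hlog
      _ = Real.cos |x| := Real.exp_log hc
      _ = Real.cos x := Real.cos_abs x
end

section
/- For all real x ≥ 0, |cos(x)| ≤ exp(−(1/2)sin²(x) − (1/4)sin⁴(x)). -/
theorem abs_cos_le (x : ℝ) (hx : 0 ≤ x) :
    |Real.cos x| ≤ Real.exp (-(1 / 2) * Real.sin x ^ 2 - (1 / 4) * Real.sin x ^ 4) := by
  set t : ℝ := Real.sin x ^ 2 with ht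
  have ht0 : 0 ≤ t := sq_nonneg _
  have ht1 : t ≤ 1 := by
    have := Real.sin_sq_le_one x; linarith
  have hcos : Real.cos x ^ 2 = 1 - t := by
    have := Real.sin_sq_add_cos_sq x; linarith
  -- cubic lower bound on exp (-t)
  have hbd := Real.exp_bound (x := -t) (by rw [abs_of_nonpos (by linarith)]; linarith)
    (n := 3) (by norm_num)
  have hsum : ∑ m ∈ Finset.range 3, (-t) ^ m / m.factorial = 1 - t + t ^ 2 / 2 := by
    simp [Finset.sum_range_succ, Nat.factorial]
    ring
  rw [hsum] at hbd
  have h1 : 1 - t + t ^ 2 / 2 - (2 / 9) * t ^ 3 ≤ Real.exp (-t) := by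
    have h := (abs_sub_le_iff.mp hbd).2
    rw [abs_neg, abs_of_nonneg ht0] at h
    norm_num [Nat.factorial] at h
    nlinarith [h]
  have h2 : 1 - t ^ 2 / 2 ≤ Real.exp (-(t ^ 2 / 2)) := by
    have := Real.add_one_le_exp (-(t ^ 2 / 2)); linarith
  have key : 1 - t ≤ Real.exp (-(t + t ^ 2 / 2)) := by
    have heq : Real.exp (-(t + t ^ 2 / 2)) = Real.exp (-t) * Real.exp (-(t ^ 2 / 2)) := by
      rw [← Real.exp_add]; ring_nf
    rw [heq]
    have hf1 : (0:ℝ) ≤ 1 - t + t ^ 2 / 2 - (2 / 9) * t ^ 3 := by nlinarith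
    have hf2 : (0:ℝ) ≤ 1 - t ^ 2 / 2 := by nlinarith
    have step1 : 1 - t ≤ (1 - t + t ^ 2 / 2 - (2 / 9) * t ^ 3) * (1 - t ^ 2 / 2) := by
      nlinarith [mul_nonneg (pow_nonneg ht0 3) (sq_nonneg (t - 9/8))]
    have step2 : (1 - t + t ^ 2 / 2 - (2 / 9) * t ^ 3) * (1 - t ^ 2 / 2) ≤
        Real.exp (-t) * Real.exp (-(t ^ 2 / 2)) :=
      mul_le_mul h1 h2 hf2 (Real.exp_pos _).le
    linarith
  -- conclude via squares
  have hgoal : -(1 / 2) * t - (1 / 4) * Real.sin x ^ 4 = -(1 / 2) * t - (1 / 4) * t ^ 2 := by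
    rw [ht]; ring
  rw [hgoal]
  have hE2 : Real.exp (-(1 / 2) * t - (1 / 4) * t ^ 2) ^ 2 = Real.exp (-(t + t ^ 2 / 2)) := by
    rw [← Real.exp_nat_mul]
    congr 1
    push_cast
    ring
  have hsq : Real.cos x ^ 2 ≤ Real.exp (-(1 / 2) * t - (1 / 4) * t ^ 2) ^ 2 := by
    rw [hcos, hE2]; exact key
  have h3 := Real.sqrt_le_sqrt hsq
  rwa [Real.sqrt_sq_eq_abs, Real.sqrt_sq_eq_abs, abs_of_pos (Real.exp_pos _)] at h3
end

section
/- For every integer n ≥ 0 and every integer m, the coefficient a_n(m) of q^m in ∏_{k=0}^n (1+q^{3k+1})(1+q^{3k+2}) satisfies a_n(m) = (2^{2n+3}/π) ∫_0^{π/2} cos((3(n+1)^2 − 2m)θ) ∏_{k=0}^{n} cos((3k+1)θ) cos((3k+2)θ) dθ. -/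
/-!
With `z = exp (2iθ)` one has `2 cos (dθ) = exp (-idθ) (1 + z ^ d)`, so
`2 ^ (2n+2) ∏ cos ((3k+1)θ) cos ((3k+2)θ) = exp (-iNθ) B_n(z)` with `N = 3(n+1)^2`.
This quantity is real, so multiplying it by `cos ((N - 2m)θ)` gives the real part of
`exp (-2imθ) B_n(z) = ∑ a_n(j) exp (2i(j-m)θ)`, i.e. `∑ a_n(j) cos (2(j-m)θ)`. Over `[0, π/2]`
the integral of `cos (2tθ)` vanishes for every integer `t ≠ 0`, leaving `(π/2) a_n(m)`.
-/

open Polynomial Finset Real intervalIntegral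

section Complex

open Complex

lemma two_cos_nat_mul_eq_exp_mul_one_add_pow (θ : ℝ) (d : ℕ) :
    2 * cos (d * θ : ℂ) = cexp (-(d * θ) * I) * (1 + cexp (2 * θ * I) ^ d) := by
  rw [two_cos, ← Complex.exp_nat_mul, mul_add, mul_one, ← Complex.exp_add]
  ring_nf

lemma prod_exp_mul_aeval {ι : Type*} (s : Finset ι) (w : ι → ℕ) (Q : ι → ℕ[X]) (θ : ℝ) :
    ∏ i ∈ s, cexp (-(w i * θ) * I) * aeval (cexp (2 * θ * I)) (Q i) =
      cexp (-((∑ i ∈ s, w i : ℕ) * θ) * I) * aeval (cexp (2 * θ * I)) (∏ i ∈ s, Q i) := by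
  rw [prod_mul_distrib, ← Complex.exp_sum, map_prod]
  push_cast
  rw [sum_mul, ← sum_neg_distrib, sum_mul]

lemma prod_two_cos_mul_two_cos {ι : Type*} (s : Finset ι) (d e : ι → ℕ) (θ : ℝ) :
    ∏ i ∈ s, (2 * cos (d i * θ : ℂ)) * (2 * cos (e i * θ : ℂ)) =
      cexp (-((∑ i ∈ s, (d i + e i) : ℕ) * θ) * I) *
        aeval (cexp (2 * θ * I)) (∏ i ∈ s, (1 + (X : ℕ[X]) ^ d i) * (1 + X ^ e i)) := by
  rw [← prod_exp_mul_aeval]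
  refine prod_congr rfl fun i _ => ?_
  rw [two_cos_nat_mul_eq_exp_mul_one_add_pow, two_cos_nat_mul_eq_exp_mul_one_add_pow]
  simp only [map_mul, map_add, map_one, map_pow, aeval_X]
  rw [show cexp (-(((d i + e i : ℕ) : ℂ) * θ) * I) =
      cexp (-(d i * θ) * I) * cexp (-(e i * θ) * I) by rw [← Complex.exp_add]; push_cast; ring_nf]
  ring

lemma cos_sub_two_mul_mul_eq_sum_coeff {P : ℕ[X]} {N : ℕ} {θ R : ℝ}
    (hR : (R : ℂ) = cexp (-(N * θ) * I) * aeval (cexp (2 * θ * I)) P) (m : ℕ) :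
    Real.cos ((N - 2 * m) * θ) * R =
      P.sum fun j c => (c : ℝ) * Real.cos (2 * ((j : ℝ) - m) * θ) := by
  have hcomplex : cexp (((N - 2 * m) * θ : ℝ) * I) * R =
      P.sum fun j c => ((c : ℝ) : ℂ) * cexp ((2 * ((j : ℝ) - m) * θ : ℝ) * I) := by
    rw [hR, aeval_def, eval₂_eq_sum, ← mul_assoc, ← Complex.exp_add, Polynomial.sum_def,
      Polynomial.sum_def, mul_sum]
    refine sum_congr rfl fun j _ => ?_
    rw [← Complex.exp_nat_mul, mul_left_comm, ← Complex.exp_add]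
    congr 2
    push_cast
    ring
  simpa only [Polynomial.sum_def, re_sum, re_mul_ofReal, re_ofReal_mul, exp_ofReal_mul_I_re]
    using congrArg Complex.re hcomplex

end Complex

lemma integral_cos_two_int_mul (t : ℤ) :
    ∫ θ in (0 : ℝ)..(π / 2), Real.cos (2 * t * θ) = if t = 0 then π / 2 else 0 := by
  split_ifs with ht
  · simp [ht]
  · have h2t : (2 * t : ℝ) ≠ 0 := by exact_mod_cast (by omega : 2 * t ≠ 0)
    rw [integral_comp_mul_left Real.cos h2t, integral_cos]
    simp [show 2 * (t : ℝ) * (π / 2) = t * π by ring, Real.sin_int_mul_pi]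

lemma integral_sum_coeff_mul_cos (P : ℕ[X]) (m : ℕ) :
    ∫ θ in (0 : ℝ)..(π / 2), (P.sum fun j c => (c : ℝ) * Real.cos (2 * ((j : ℝ) - m) * θ)) =
      π / 2 * P.coeff m := by
  have hcos (j : ℕ) : ∫ θ in (0 : ℝ)..(π / 2), Real.cos (2 * ((j : ℝ) - m) * θ) =
      if j = m then π / 2 else 0 := by
    simpa [sub_eq_zero] using integral_cos_two_int_mul ((j : ℤ) - m)
  simp only [Polynomial.sum_def]
  rw [integral_finsetSum fun j _ => (by fun_prop : Continuous _).intervalIntegrable _ _]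
  simp only [integral_const_mul, hcos, mul_ite, mul_zero, sum_ite_eq', mem_support_iff]
  split_ifs with h
  · ring
  · simp [not_not.mp h]

lemma sum_range_borwein_exponents (n : ℕ) :
    ∑ k ∈ range (n + 1), ((3 * k + 1) + (3 * k + 2)) = 3 * (n + 1) ^ 2 := by
  induction n with
  | zero => rfl
  | succ n ih => rw [sum_range_succ, ih]; ring

theorem borwein_coeff_integral (n m : ℕ) :
    ((∏ k ∈ Finset.range (n + 1),
        ((1 + (X : ℕ[X]) ^ (3 * k + 1)) * (1 + X ^ (3 * k + 2)))).coeff m : ℝ) =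
    2 ^ (2 * n + 3) / Real.pi *
      ∫ θ in (0 : ℝ)..(Real.pi / 2),
        Real.cos ((3 * (n + 1) ^ 2 - 2 * m : ℝ) * θ) *
          ∏ k ∈ Finset.range (n + 1),
            (Real.cos ((3 * k + 1) * θ) * Real.cos ((3 * k + 2) * θ)) := by
  set P : ℕ[X] := ∏ k ∈ range (n + 1), (1 + X ^ (3 * k + 1)) * (1 + X ^ (3 * k + 2))
  have hR (θ : ℝ) : ((2 ^ (2 * n + 2) * ∏ k ∈ range (n + 1),
      (Real.cos ((3 * k + 1) * θ) * Real.cos ((3 * k + 2) * θ)) : ℝ) : ℂ) =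
      Complex.exp (-((3 * (n + 1) ^ 2 : ℕ) * θ) * Complex.I) *
        aeval (Complex.exp (2 * θ * Complex.I)) P := by
    rw [← sum_range_borwein_exponents, ← prod_two_cos_mul_two_cos]
    push_cast
    rw [show (2 : ℂ) ^ (2 * n + 2) = ∏ _k ∈ range (n + 1), 2 * 2 by
      rw [prod_const, card_range, ← pow_two, ← pow_mul]; ring, ← prod_mul_distrib]
    exact prod_congr rfl fun _ _ => by ring
  have hintegrand (θ : ℝ) : Real.cos ((3 * (n + 1) ^ 2 - 2 * m : ℝ) * θ) *
      ∏ k ∈ range (n + 1), (Real.cos ((3 * k + 1) * θ) * Real.cos ((3 * k + 2) * θ)) =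
      (P.sum fun j c => (c : ℝ) * Real.cos (2 * ((j : ℝ) - m) * θ)) / 2 ^ (2 * n + 2) := by
    rw [← cos_sub_two_mul_mul_eq_sum_coeff (hR θ) m]
    push_cast
    field_simp
  simp only [hintegrand, integral_div, integral_sum_coeff_mul_cos]
  field_simp
  ring
end

section
/- For all real θ with π/(6n+4) ≤ θ ≤ π/2 and every integer n ≥ 168, |∏_{k=0}^{n} cos((3k+1)θ) cos((3k+2)θ)| < exp(−0.163n − 0.031). -/
open Finset

open Real Finset

lemma cosmulcos (x y : ℝ) : cos x * cos y = (cos (x - y) + cos (x + y)) / 2 := by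
  rw [cos_sub, cos_add]; ring

lemma f_eq (θ : ℝ) (k : ℕ) :
    cos ((3 * (k:ℝ) + 1) * θ) * cos ((3 * (k:ℝ) + 2) * θ)
      = (cos θ + cos ((6 * (k:ℝ) + 3) * θ)) / 2 := by
  rw [cosmulcos]
  have h1 : (3 * (k:ℝ) + 1) * θ - (3 * (k:ℝ) + 2) * θ = -θ := by ring
  have h2 : (3 * (k:ℝ) + 1) * θ + (3 * (k:ℝ) + 2) * θ = (6 * (k:ℝ) + 3) * θ := by ring
  rw [h1, h2, cos_neg]

lemma pair_identity (c t ψ : ℝ) :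
    (c + cos ψ) * (c + cos (ψ + 2 * t))
      = (cos (ψ + t) + c * cos t) ^ 2 - (1 - c ^ 2) * (1 - cos t ^ 2) := by
  have hψ : ψ = (ψ + t) - t := by ring
  have h2 : ψ + 2 * t = (ψ + t) + t := by ring
  rw [h2, cos_add]
  nth_rewrite 1 [hψ]
  rw [cos_sub]
  have P1 := sin_sq_add_cos_sq (ψ + t)
  have P2 := sin_sq_add_cos_sq t
  nlinarith [P1, P2, sq_nonneg (sin (ψ+t)), sq_nonneg (sin t)]

lemma cube_bound {v w : ℝ} (hv0 : 0 ≤ v) (hvw : v ≤ w) (hw2 : w ≤ 2) :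
    (w - v) * v ^ 2 ≤ 4 := by
  have h1 : (w - v) * v ^ 2 ≤ (2 - v) * v ^ 2 := by nlinarith [sq_nonneg v]
  have h2 : (2 - v) * v ^ 2 ≤ 4 := by
    nlinarith [mul_nonneg (sq_nonneg (3 * v - 4)) (by linarith : (0:ℝ) ≤ 3 * v + 2)]
  linarith

lemma triple_core {c e a Y : ℝ} (hc0 : 0 ≤ c) (hc1 : c ≤ 1)
    (he1 : -1 ≤ e) (he2 : e ≤ 0.2108) (ha1 : -1 ≤ a) (ha2 : a ≤ 1)
    (hY0 : 0 ≤ Y) (hY1 : Y ≤ 1) :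
    |(c + a) * ((a + c * e) ^ 2 - Y)| ≤ 4 := by
  rw [abs_mul]
  have hce : c * e ≤ 0.2108 := by
    rcases le_or_gt 0 e with h | h
    · nlinarith
    · nlinarith
  have hce1 : -1 ≤ c * e := by nlinarith
  rcases le_or_gt (c + a) 0 with hca | hca
  · -- a ≤ -c
    have h1 : |c + a| ≤ 1 - c := by
      rw [abs_of_nonpos hca]; linarith
    have h2 : |(a + c * e) ^ 2 - Y| ≤ (1 + c) ^ 2 := by
      rw [abs_le]
      have k1 : (0:ℝ) ≤ c * (1 - e) := mul_nonneg hc0 (by linarith)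
      have k2 : (0:ℝ) ≤ c * (1 + e) := mul_nonneg hc0 (by linarith)
      constructor
      · nlinarith [sq_nonneg (a + c * e)]
      · nlinarith [mul_nonneg (by nlinarith : (0:ℝ) ≤ 1 + c - a - c*e) (by nlinarith : (0:ℝ) ≤ 1 + c + a + c*e)]
    calc |c + a| * |(a + c*e)^2 - Y| ≤ (1 - c) * (1 + c) ^ 2 := by
          apply mul_le_mul h1 h2 (abs_nonneg _) (by linarith)
      _ ≤ 4 := by nlinarith
  · have h1 : |c + a| = c + a := abs_of_pos hca
    rcases le_or_gt 0 (a + c * e) with hu | hu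
    · -- u ≥ 0 : u ≤ 1.2108, |...| ≤ max(u^2, Y) ≤ 1.4661
      have h2 : |(a + c * e) ^ 2 - Y| ≤ 1.4661 := by
        rw [abs_le]
        constructor
        · nlinarith
        · nlinarith
      calc |c + a| * |(a + c*e)^2 - Y| ≤ 2 * 1.4661 := by
            apply mul_le_mul (by rw [h1]; linarith) h2 (abs_nonneg _) (by norm_num)
        _ ≤ 4 := by norm_num
    · -- u < 0 : v = -u ≤ w = c(1-e), c+a = w - v
      set v : ℝ := -(a + c * e) with hv
      set w : ℝ := c * (1 - e) with hw
      have hvw : v ≤ w := by simp only [hv, hw]; nlinarith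
      have hv0 : 0 ≤ v := by simp only [hv]; linarith
      have hw2 : w ≤ 2 := by simp only [hw]; nlinarith
      have hwa : c + a = w - v + (a + c * e) + v := by simp only [hv, hw]; ring
      rcases le_or_gt Y ((a + c*e)^2) with hY | hY
      · have h2 : |(a + c * e) ^ 2 - Y| ≤ v ^ 2 := by
          rw [abs_of_nonneg (by linarith)]
          nlinarith
        have hca2 : c + a ≤ w - v := by simp only [hv, hw]; nlinarith
        calc |c + a| * |(a + c*e)^2 - Y| ≤ (c + a) * v ^ 2 := by
              rw [h1]; exact mul_le_mul_of_nonneg_left h2 (by linarith)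
          _ ≤ (w - v) * v ^ 2 := by
              apply mul_le_mul_of_nonneg_right hca2 (sq_nonneg v)
          _ ≤ 4 := cube_bound hv0 hvw hw2
      · have h2 : |(a + c * e) ^ 2 - Y| ≤ 1 := by
          rw [abs_of_neg (by linarith)]
          nlinarith [sq_nonneg (a + c * e)]
        calc |c + a| * |(a + c*e)^2 - Y| ≤ 2 * 1 := by
              apply mul_le_mul (by rw [h1]; linarith) h2 (abs_nonneg _) (by norm_num)
          _ ≤ 4 := by norm_num

lemma triple_cos {c t : ℝ} (ψ : ℝ) (hc0 : 0 ≤ c) (hc1 : c ≤ 1) (he : cos t ≤ 0.2108) :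
    |(c + cos ψ) * (c + cos (ψ + t)) * (c + cos (ψ + 2 * t))| ≤ 4 := by
  have hre : (c + cos ψ) * (c + cos (ψ + t)) * (c + cos (ψ + 2 * t))
      = (c + cos (ψ + t)) * ((cos (ψ + t) + c * cos t) ^ 2 - (1 - c ^ 2) * (1 - cos t ^ 2)) := by
    rw [← pair_identity]; ring
  rw [hre]
  exact triple_core hc0 hc1 (neg_one_le_cos t) he (neg_one_le_cos (ψ + t)) (cos_le_one _)
    (mul_nonneg (by nlinarith : (0:ℝ) ≤ 1 - c^2) (by nlinarith [sin_sq_add_cos_sq t, sq_nonneg (sin t)] : (0:ℝ) ≤ 1 - cos t ^2))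
    (by
      have g1 : (0:ℝ) ≤ 1 - cos t ^ 2 := by nlinarith [sin_sq_add_cos_sq t, sq_nonneg (sin t)]
      have g2 : (1:ℝ) - c ^ 2 ≤ 1 := by nlinarith
      have g3 : (1:ℝ) - cos t ^ 2 ≤ 1 := by nlinarith [sq_nonneg (cos t)]
      exact mul_le_one₀ g2 g1 g3)

open Real Finset

noncomputable def FF (θ : ℝ) (k : ℕ) : ℝ :=
  Real.cos ((3 * (k:ℝ) + 1) * θ) * Real.cos ((3 * (k:ℝ) + 2) * θ)

lemma abs_FF_le_one (θ : ℝ) (k : ℕ) : |FF θ k| ≤ 1 := by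
  rw [FF, abs_mul]
  exact mul_le_one₀ (abs_cos_le_one _) (abs_nonneg _) (abs_cos_le_one _)

lemma cos_lit : cos (0.41:ℝ) ≤ 0.9175 := by
  have h := Real.cos_bound (x := (0.41:ℝ)) (by rw [abs_of_nonneg] <;> norm_num)
  rw [abs_le] at h
  have h2 := h.2
  rw [abs_of_nonneg (by norm_num : (0:ℝ) ≤ 0.41)] at h2
  norm_num at h2 ⊢
  linarith

lemma case3 (n : ℕ) (hn : 168 ≤ n) (θ : ℝ) (hlo : 0.82 ≤ θ) (h2 : θ ≤ Real.pi / 2) :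
    |∏ k ∈ Finset.range (n + 1), FF θ k| < Real.exp (-0.163 * n - 0.031) := by
  have hpi : (3.141592:ℝ) < Real.pi := Real.pi_gt_d6
  -- single factor bound
  have hhalf : cos (θ/2) ≤ 0.9175 := by
    apply le_trans (Real.cos_le_cos_of_nonneg_of_le_pi (by norm_num) (by linarith) (by linarith)) cos_lit
  have hhalf0 : 0 ≤ cos (θ/2) := by
    apply Real.cos_nonneg_of_mem_Icc
    constructor <;> [linarith; linarith]
  have hc : cos θ ≤ 0.6837 := by
    have := Real.cos_two_mul (θ/2)
    have h22 : 2 * (θ/2) = θ := by ring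
    rw [h22] at this
    nlinarith [hhalf, hhalf0]
  have hc0 : 0 ≤ cos θ := by
    apply Real.cos_nonneg_of_mem_Icc
    constructor <;> [linarith; linarith]
  have hF : ∀ k ∈ Finset.range (n+1), |FF θ k| ≤ 0.8419 := by
    intro k _
    rw [FF, f_eq]
    rw [abs_le]
    have hcc := neg_one_le_cos ((6 * (k:ℝ) + 3) * θ)
    have hcc2 := Real.cos_le_one ((6 * (k:ℝ) + 3) * θ)
    constructor <;> [nlinarith; nlinarith]
  have hprod : |∏ k ∈ Finset.range (n + 1), FF θ k| ≤ 0.8419 ^ (n+1) := by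
    rw [Finset.abs_prod]
    calc ∏ k ∈ Finset.range (n+1), |FF θ k| ≤ ∏ k ∈ Finset.range (n+1), (0.8419:ℝ) :=
          Finset.prod_le_prod (fun k _ => abs_nonneg _) hF
      _ = 0.8419 ^ (n+1) := by rw [Finset.prod_const, Finset.card_range]
  have E1 : (0.8419:ℝ) < Real.exp (-0.163) := by
    have ha : (0.95925:ℝ) ≤ Real.exp (-0.04075) := by
      have := Real.add_one_le_exp (-0.04075:ℝ); linarith
    have hb : (0.95925:ℝ)^4 ≤ Real.exp (-0.04075)^4 := by
      apply pow_le_pow_left₀ (by norm_num) ha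
    have hc : Real.exp (-0.04075:ℝ)^4 = Real.exp (-0.163) := by
      rw [← Real.exp_nat_mul]; norm_num
    nlinarith [hb]
  have E2 : (0.8419:ℝ) < Real.exp (-0.031) := by
    have := Real.add_one_le_exp (-0.031:ℝ); linarith
  have key : (0.8419:ℝ) ^ (n+1) < Real.exp (-0.163 * n - 0.031) := by
    have k1 : (0.8419:ℝ)^n ≤ Real.exp (-0.163)^n :=
      pow_le_pow_left₀ (by norm_num) (le_of_lt E1) n
    have k2 : (0.8419:ℝ)^(n+1) < Real.exp (-0.163)^n * Real.exp (-0.031) := by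
      rw [pow_succ]
      exact mul_lt_mul' k1 E2 (by norm_num) (pow_pos (Real.exp_pos _) n)
    have k3 : Real.exp (-0.163:ℝ)^n * Real.exp (-0.031) = Real.exp (-0.163 * n - 0.031) := by
      rw [← Real.exp_nat_mul, ← Real.exp_add]
      ring_nf
    rw [k3] at k2; exact k2
  linarith
set_option maxHeartbeats 1000000 in
lemma prod_FF_le (θ : ℝ) (N : ℕ) (K : Finset ℕ) (hsub : K ⊆ Finset.range N)
    (hK : ∀ k ∈ K, |FF θ k| ≤ 1/2) :
    |∏ k ∈ Finset.range N, FF θ k| ≤ (1/2) ^ K.card := by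
  rw [Finset.abs_prod]
  calc ∏ k ∈ Finset.range N, |FF θ k|
      = (∏ k ∈ Finset.range N \ K, |FF θ k|) * ∏ k ∈ K, |FF θ k| :=
        (Finset.prod_sdiff hsub).symm
    _ ≤ 1 * ∏ k ∈ K, |FF θ k| := by
        apply mul_le_mul_of_nonneg_right
          (Finset.prod_le_one (fun k _ => abs_nonneg _) (fun k _ => abs_FF_le_one θ k))
          (Finset.prod_nonneg (fun k _ => abs_nonneg _))
    _ = ∏ k ∈ K, |FF θ k| := one_mul _
    _ ≤ ∏ k ∈ K, ((1:ℝ)/2) := Finset.prod_le_prod (fun k _ => abs_nonneg _) hK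
    _ = (1/2) ^ K.card := Finset.prod_const _

lemma half_pow_lt_exp {G : ℕ} {x : ℝ} (h : x < (G:ℝ) * Real.log 2) :
    ((1:ℝ)/2) ^ G < Real.exp (-x) := by
  have h12 : ((1:ℝ)/2) = Real.exp (-(Real.log 2)) := by
    rw [Real.exp_neg, Real.exp_log (by norm_num : (0:ℝ) < 2)]
    norm_num
  rw [h12, ← Real.exp_nat_mul]
  apply Real.exp_lt_exp.mpr
  nlinarith

set_option maxHeartbeats 2000000 in
lemma case1 (n : ℕ) (hn : 168 ≤ n) (θ : ℝ) (h1 : Real.pi / (6 * n + 4) ≤ θ)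
    (h2 : θ ≤ Real.pi / 2) (hup : θ ≤ 2 / n) :
    |∏ k ∈ Finset.range (n + 1), FF θ k| < Real.exp (-0.163 * n - 0.031) := by
  have hπ : (3.141592:ℝ) < Real.pi := Real.pi_gt_d6
  have hπ2 : Real.pi < 3.141593 := Real.pi_lt_d6
  have hnR : (168:ℝ) ≤ (n:ℝ) := by exact_mod_cast hn
  have hn0 : (0:ℝ) < n := by linarith
  have hθ0 : 0 < θ := lt_of_lt_of_le (by positivity) h1
  have hnθ : (n:ℝ) * θ ≤ 2 := by
    have := mul_le_mul_of_nonneg_left hup (le_of_lt hn0)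
    rw [mul_div_cancel₀] at this
    · linarith
    · linarith
  have hθsmall : θ ≤ 0.012 := by
    nlinarith [mul_le_mul_of_nonneg_right hnR (le_of_lt hθ0)]
  have hπθ : Real.pi ≤ θ * (6 * n + 4) := by
    rw [div_le_iff₀ (by positivity)] at h1; linarith
  set a₀ : ℝ := (Real.pi/2 - 3*θ) / (6*θ) with ha₀
  set b₀ : ℝ := (3*Real.pi/2 - 3*θ) / (6*θ) with hb₀
  have h6θ : (0:ℝ) < 6 * θ := by linarith
  have ha₀pos : 0 ≤ a₀ := by
    apply div_nonneg _ (le_of_lt h6θ)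
    nlinarith
  have hb₀pos : 0 ≤ b₀ := by
    apply div_nonneg _ (le_of_lt h6θ)
    nlinarith
  have hba : b₀ - a₀ = Real.pi / (6*θ) := by
    rw [ha₀, hb₀, div_sub_div_same]
    congr 1
    ring
  have hπ6θ : 3.141592 * (n:ℝ) / 12 ≤ Real.pi / (6*θ) := by
    rw [le_div_iff₀ h6θ]
    nlinarith
  -- the good set
  set K : Finset ℕ := Finset.Icc ⌈a₀⌉₊ (min n ⌊b₀⌋₊) with hK
  have hsub : K ⊆ Finset.range (n+1) := by
    intro k hk
    rw [hK, Finset.mem_Icc] at hk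
    rw [Finset.mem_range]
    omega
  have hgood : ∀ k ∈ K, |FF θ k| ≤ 1/2 := by
    intro k hk
    rw [hK, Finset.mem_Icc] at hk
    have hk1 : a₀ ≤ (k:ℝ) := le_trans (Nat.le_ceil a₀) (by exact_mod_cast hk.1)
    have hk2 : (k:ℝ) ≤ b₀ := by
      have : (k:ℝ) ≤ (⌊b₀⌋₊ : ℝ) := by exact_mod_cast le_trans hk.2 (min_le_right _ _)
      exact le_trans this (Nat.floor_le hb₀pos)
    rw [ha₀, div_le_iff₀ h6θ] at hk1
    rw [hb₀, le_div_iff₀ h6θ] at hk2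
    have hψlo : Real.pi/2 ≤ (6*(k:ℝ)+3) * θ := by nlinarith
    have hψhi : (6*(k:ℝ)+3) * θ ≤ Real.pi + Real.pi/2 := by nlinarith
    have hcosψ : Real.cos ((6*(k:ℝ)+3) * θ) ≤ 0 :=
      Real.cos_nonpos_of_pi_div_two_le_of_le hψlo hψhi
    have hcosψ1 : -1 ≤ Real.cos ((6*(k:ℝ)+3) * θ) := Real.neg_one_le_cos _
    have hc0 : 0 ≤ Real.cos θ := by
      apply Real.cos_nonneg_of_mem_Icc
      rw [Set.mem_Icc]
      constructor
      · linarith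
      · linarith
    have hc1 : Real.cos θ ≤ 1 := Real.cos_le_one θ
    rw [FF, f_eq, abs_le]
    constructor
    · linarith
    · linarith
  have hprod := prod_FF_le θ (n+1) K hsub hgood
  -- cardinality lower bound
  have hcard : (0.2352:ℝ) * n + 0.045 ≤ K.card := by
    have hceil : (⌈a₀⌉₊ : ℝ) < a₀ + 1 := Nat.ceil_lt_add_one ha₀pos
    have ha₀up : a₀ ≤ (n:ℝ)/2 - 1/6 := by
      rw [ha₀, div_le_iff₀ h6θ]
      nlinarith
    rcases le_or_gt n ⌊b₀⌋₊ with hmin | hmin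
    · -- K = Icc ⌈a₀⌉ n
      have hminEq : min n ⌊b₀⌋₊ = n := min_eq_left hmin
      have hceiln : ⌈a₀⌉₊ ≤ n := by
        have : (⌈a₀⌉₊:ℝ) ≤ (n:ℝ) := by nlinarith
        exact_mod_cast this
      have : K.card = n + 1 - ⌈a₀⌉₊ := by rw [hK, hminEq, Nat.card_Icc]
      have hcR : (K.card : ℝ) = (n:ℝ) + 1 - (⌈a₀⌉₊:ℝ) := by
        rw [this, Nat.cast_sub (by omega)]
        push_cast; ring
      nlinarith
    · -- K = Icc ⌈a₀⌉ ⌊b₀⌋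
      have hminEq : min n ⌊b₀⌋₊ = ⌊b₀⌋₊ := min_eq_right (le_of_lt hmin)
      have hfloor : b₀ - 1 ≤ (⌊b₀⌋₊ : ℝ) := by
        have := Nat.lt_floor_add_one b₀; linarith
      have hgap : a₀ + 1 ≤ (⌊b₀⌋₊:ℝ) := by nlinarith
      have hcl : ⌈a₀⌉₊ ≤ ⌊b₀⌋₊ := by
        have : (⌈a₀⌉₊:ℝ) ≤ (⌊b₀⌋₊:ℝ) := by nlinarith
        exact_mod_cast this
      have : K.card = ⌊b₀⌋₊ + 1 - ⌈a₀⌉₊ := by rw [hK, hminEq, Nat.card_Icc]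
      have hcR : (K.card : ℝ) = (⌊b₀⌋₊:ℝ) + 1 - (⌈a₀⌉₊:ℝ) := by
        rw [this, Nat.cast_sub (by omega)]
        push_cast; ring
      nlinarith
  -- numeric finish
  have hlog2 : (0.6931471:ℝ) < Real.log 2 := by
    have := Real.log_two_gt_d9; linarith
  have hfinal : ((1:ℝ)/2) ^ K.card < Real.exp (-0.163 * n - 0.031) := by
    have : -0.163 * (n:ℝ) - 0.031 = -(0.163 * n + 0.031) := by ring
    rw [this]
    apply half_pow_lt_exp
    have hcard0 : (0:ℝ) ≤ (K.card : ℝ) := Nat.cast_nonneg _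
    nlinarith [mul_le_mul_of_nonneg_left (le_of_lt hlog2) hcard0]
  linarith
open Real Finset

lemma prod_abs_subset (θ : ℝ) (N : ℕ) (s : Finset ℕ) (hsub : s ⊆ Finset.range N) :
    |∏ k ∈ Finset.range N, FF θ k| ≤ ∏ k ∈ s, |FF θ k| := by
  rw [Finset.abs_prod]
  calc ∏ k ∈ Finset.range N, |FF θ k|
      = (∏ k ∈ Finset.range N \ s, |FF θ k|) * ∏ k ∈ s, |FF θ k| :=
        (Finset.prod_sdiff hsub).symm
    _ ≤ 1 * ∏ k ∈ s, |FF θ k| := by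
        apply mul_le_mul_of_nonneg_right
          (Finset.prod_le_one (fun k _ => abs_nonneg _) (fun k _ => abs_FF_le_one θ k))
          (Finset.prod_nonneg (fun k _ => abs_nonneg _))
    _ = ∏ k ∈ s, |FF θ k| := one_mul _

set_option maxHeartbeats 2000000 in
lemma case2 (n : ℕ) (hn : 168 ≤ n) (θ : ℝ) (hlo : 2 / n ≤ θ) (hhi : θ ≤ 0.82)
    (h2 : θ ≤ Real.pi / 2) :
    |∏ k ∈ Finset.range (n + 1), FF θ k| < Real.exp (-0.163 * n - 0.031) := by
  have hπ : (3.141592:ℝ) < Real.pi := Real.pi_gt_d6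
  have hπ2 : Real.pi < 3.141593 := Real.pi_lt_d6
  have hnR : (168:ℝ) ≤ (n:ℝ) := by exact_mod_cast hn
  have hn0 : (0:ℝ) < n := by linarith
  have hθ0 : 0 < θ := lt_of_lt_of_le (by positivity) hlo
  have hnθ : 2 ≤ (n:ℝ) * θ := by
    have := mul_le_mul_of_nonneg_left hlo (le_of_lt hn0)
    rw [mul_div_cancel₀] at this
    · linarith
    · linarith
  have hcos136 : Real.cos 1.36 ≤ 0.2108 := by
    rw [← Real.sin_pi_div_two_sub]
    have hz : (0:ℝ) < Real.pi/2 - 1.36 := by linarith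
    have := Real.sin_lt hz
    linarith
  have hcos1363 : Real.cos 1.3631 ≤ 0.2108 := by
    rw [← Real.sin_pi_div_two_sub]
    have hz : (0:ℝ) < Real.pi/2 - 1.3631 := by linarith
    have := Real.sin_lt hz
    linarith
  -- choose stride m
  obtain ⟨m, hm1, hme, hmb⟩ :
      ∃ m : ℕ, 1 ≤ m ∧ Real.cos (6*(m:ℝ)*θ) ≤ 0.2108 ∧ (m:ℝ) ≤ 0.1134 * n + 1 := by
    rcases lt_or_ge (6*θ) 1.36 with hA | hB
    · refine ⟨⌈(1.36:ℝ)/(6*θ)⌉₊, ?_, ?_, ?_⟩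
      · rw [Nat.one_le_ceil_iff]
        positivity
      · have hceil1 := Nat.le_ceil ((1.36:ℝ)/(6*θ))
        have hceil2 := Nat.ceil_lt_add_one (le_of_lt (by positivity : (0:ℝ) < 1.36/(6*θ)))
        have h6θ : (0:ℝ) < 6*θ := by linarith
        rw [div_le_iff₀ h6θ] at hceil1
        have hlow : (1.36:ℝ) ≤ 6*(⌈(1.36:ℝ)/(6*θ)⌉₊:ℝ)*θ := by linarith
        have hup2 : 6*(⌈(1.36:ℝ)/(6*θ)⌉₊:ℝ)*θ ≤ 2.72 := by
          have h := mul_lt_mul_of_pos_right hceil2 h6θ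
          rw [add_mul, div_mul_cancel₀, one_mul] at h
          · nlinarith
          · positivity
        calc Real.cos (6*(⌈(1.36:ℝ)/(6*θ)⌉₊:ℝ)*θ) ≤ Real.cos 1.36 :=
              Real.cos_le_cos_of_nonneg_of_le_pi (by norm_num) (by linarith) hlow
          _ ≤ 0.2108 := hcos136
      · have hceil2 := Nat.ceil_lt_add_one (le_of_lt (by positivity : (0:ℝ) < 1.36/(6*θ)))
        have h6θ : (0:ℝ) < 6*θ := by linarith
        have hd : (1.36:ℝ)/(6*θ) ≤ 0.1134 * n := by
          rw [div_le_iff₀ h6θ]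
          nlinarith
        linarith
    · refine ⟨1, le_refl 1, ?_, by nlinarith⟩
      push_cast
      rcases le_or_gt (6*θ) Real.pi with hC | hC
      · calc Real.cos (6*1*θ) ≤ Real.cos 1.36 := by
              apply Real.cos_le_cos_of_nonneg_of_le_pi (by norm_num) (by linarith)
              linarith
          _ ≤ 0.2108 := hcos136
      · have : Real.cos (6*1*θ) = Real.cos (2*Real.pi - 6*1*θ) := (Real.cos_two_pi_sub _).symm
        rw [this]
        calc Real.cos (2*Real.pi - 6*1*θ) ≤ Real.cos 1.3631 := by
              apply Real.cos_le_cos_of_nonneg_of_le_pi (by norm_num) (by linarith)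
              nlinarith
          _ ≤ 0.2108 := hcos1363
  -- counting
  have h2m : 2*m ≤ n := by
    have : (2*(m:ℝ)) ≤ (n:ℝ) := by nlinarith
    exact_mod_cast this
  set N : ℕ := n + 1 - 2*m with hN
  have hNR : (N:ℝ) = (n:ℝ) + 1 - 2*(m:ℝ) := by
    rw [hN, Nat.cast_sub (by omega)]
    push_cast; ring
  -- factor bounds
  have hc0 : 0 ≤ Real.cos θ := by
    apply Real.cos_nonneg_of_mem_Icc
    rw [Set.mem_Icc]
    constructor
    · linarith
    · linarith
  have hc1 : Real.cos θ ≤ 1 := Real.cos_le_one θ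
  have htriple : ∀ k : ℕ, |FF θ k * FF θ (m + k) * FF θ (2*m + k)| ≤ 1/2 := by
    intro k
    have e1 : (3 * ((m + k : ℕ):ℝ) + 1) * θ = (3 * ((m:ℝ) + k) + 1) * θ := by push_cast; ring
    rw [FF, FF, FF, f_eq, f_eq, f_eq]
    have a1 : (6 * ((m + k : ℕ):ℝ) + 3) * θ = (6*(k:ℝ)+3)*θ + 6*(m:ℝ)*θ := by push_cast; ring
    have a2 : (6 * ((2*m + k : ℕ):ℝ) + 3) * θ = (6*(k:ℝ)+3)*θ + 2*(6*(m:ℝ)*θ) := by push_cast; ring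
    rw [a1, a2]
    set c := Real.cos θ
    set ψ := (6*(k:ℝ)+3)*θ
    set t := 6*(m:ℝ)*θ
    have hrw : (c + Real.cos ψ)/2 * ((c + Real.cos (ψ + t))/2) * ((c + Real.cos (ψ + 2*t))/2)
        = (c + Real.cos ψ) * (c + Real.cos (ψ + t)) * (c + Real.cos (ψ + 2*t)) / 8 := by ring
    rw [hrw, abs_div]
    rw [abs_of_pos (by norm_num : (0:ℝ) < 8)]
    have := triple_cos (c := c) (t := t) ψ hc0 hc1 hme
    linarith
  -- shifted products
  have hshift : ∀ i : ℕ, i ≤ 2 →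
      |∏ k ∈ Finset.range (n + 1), FF θ k| ≤ ∏ k ∈ Finset.range N, |FF θ (i*m + k)| := by
    intro i hi
    have hsub : Finset.Ico (i*m) (i*m + N) ⊆ Finset.range (n+1) := by
      intro x hx
      rw [Finset.mem_Ico] at hx
      rw [Finset.mem_range]
      have ha : i*m ≤ 2*m := Nat.mul_le_mul_right m hi
      have hb : 2*m + N ≤ n + 1 := by omega
      have : i*m + N ≤ n + 1 := le_trans (Nat.add_le_add_right ha N) hb
      omega
    calc |∏ k ∈ Finset.range (n + 1), FF θ k|
        ≤ ∏ k ∈ Finset.Ico (i*m) (i*m + N), |FF θ k| := prod_abs_subset θ (n+1) _ hsub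
      _ = ∏ k ∈ Finset.range N, |FF θ (i*m + k)| := by
          rw [Finset.prod_Ico_eq_prod_range]
          rw [Nat.add_sub_cancel_left]
  have hP0 := hshift 0 (by norm_num)
  have hP1 := hshift 1 (by norm_num)
  have hP2 := hshift 2 (by norm_num)
  simp only [Nat.zero_mul, Nat.zero_add, Nat.one_mul] at hP0 hP1 hP2
  set P := |∏ k ∈ Finset.range (n + 1), FF θ k| with hPdef
  have hPpos : 0 ≤ P := abs_nonneg _
  have hcube : P^3 ≤ (1/2:ℝ)^N := by
    have hstep : P^3 ≤ (∏ k ∈ Finset.range N, |FF θ k|) *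
        (∏ k ∈ Finset.range N, |FF θ (m + k)|) * (∏ k ∈ Finset.range N, |FF θ (2*m + k)|) := by
      have n0 : (0:ℝ) ≤ ∏ k ∈ Finset.range N, |FF θ (m + k)| :=
        Finset.prod_nonneg (fun k _ => abs_nonneg _)
      have n2 : (0:ℝ) ≤ ∏ k ∈ Finset.range N, |FF θ (2*m+k)| :=
        Finset.prod_nonneg (fun k _ => abs_nonneg _)
      calc P^3 = P * P * P := by ring
        _ ≤ (∏ k ∈ Finset.range N, |FF θ k|) * (∏ k ∈ Finset.range N, |FF θ (m + k)|) *
            (∏ k ∈ Finset.range N, |FF θ (2*m + k)|) := by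
            apply mul_le_mul (mul_le_mul hP0 hP1 hPpos ?_) hP2 hPpos ?_
            · exact le_trans hPpos hP0
            · exact mul_nonneg (le_trans hPpos hP0) n0
    have hcombine : (∏ k ∈ Finset.range N, |FF θ k|) *
        (∏ k ∈ Finset.range N, |FF θ (m + k)|) * (∏ k ∈ Finset.range N, |FF θ (2*m + k)|)
        = ∏ k ∈ Finset.range N, (|FF θ k| * |FF θ (m + k)| * |FF θ (2*m + k)|) := by
      rw [Finset.prod_mul_distrib, Finset.prod_mul_distrib]
    have hbnd : ∏ k ∈ Finset.range N, (|FF θ k| * |FF θ (m + k)| * |FF θ (2*m + k)|)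
        ≤ (1/2:ℝ)^N := by
      calc ∏ k ∈ Finset.range N, (|FF θ k| * |FF θ (m + k)| * |FF θ (2*m + k)|)
          ≤ ∏ k ∈ Finset.range N, ((1:ℝ)/2) := by
            apply Finset.prod_le_prod
            · intro k _
              positivity
            · intro k _
              have := htriple k
              rw [abs_mul, abs_mul] at this
              exact this
        _ = (1/2:ℝ)^N := by rw [Finset.prod_const, Finset.card_range]
    rw [hcombine] at hstep
    linarith
  -- numeric finish
  have hlog2 : (0.6931471:ℝ) < Real.log 2 := by
    have := Real.log_two_gt_d9; linarith
  have hNlarge : (0.489:ℝ) * n + 0.093 < (N:ℝ) * Real.log 2 := by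
    have hNlow : (0.7732:ℝ)*n - 1 ≤ (N:ℝ) := by rw [hNR]; nlinarith
    have hN0 : (0:ℝ) ≤ (N:ℝ) := Nat.cast_nonneg _
    nlinarith [mul_le_mul_of_nonneg_left (le_of_lt hlog2) hN0]
  have hfinal : ((1:ℝ)/2) ^ N < Real.exp (3 * (-0.163 * n - 0.031)) := by
    have : (3:ℝ) * (-0.163 * n - 0.031) = -(0.489 * n + 0.093) := by ring
    rw [this]
    exact half_pow_lt_exp hNlarge
  have hPexp : P^3 < Real.exp (-0.163 * n - 0.031) ^ 3 := by
    have : Real.exp (-0.163 * n - 0.031) ^ 3 = Real.exp (3 * (-0.163 * n - 0.031)) := by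
      rw [← Real.exp_nat_mul]
      norm_num
    rw [this]
    exact lt_of_le_of_lt hcube hfinal
  exact lt_of_pow_lt_pow_left₀ 3 (le_of_lt (Real.exp_pos _)) hPexp

theorem borwein_product_bound (n : ℕ) (hn : 168 ≤ n) (θ : ℝ)
    (h1 : Real.pi / (6 * n + 4) ≤ θ) (h2 : θ ≤ Real.pi / 2) :
    |∏ k ∈ Finset.range (n + 1),
        (Real.cos ((3 * k + 1) * θ) * Real.cos ((3 * k + 2) * θ))| <
      Real.exp (-0.163 * n - 0.031) := by
  have hmain : |∏ k ∈ Finset.range (n + 1), FF θ k| < Real.exp (-0.163 * n - 0.031) := by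
    rcases le_or_gt θ (2 / n) with hc | hc
    · exact case1 n hn θ h1 h2 hc
    · rcases le_or_gt θ 0.82 with hd | hd
      · exact case2 n hn θ (le_of_lt hc) hd h2
      · exact case3 n hn θ (le_of_lt hd) h2
  exact hmain
end

section
/- For all real θ with π/(6n+4) ≤ θ ≤ π/6 and integer n ≥ 1, |∏_{k=0}^{n} cos((3k+1)θ) cos((3k+2)θ)| ≤ exp(−(42n+43)/64 + 33(6n+4)/(128π(1 − 6π²/(12n+8)²))). -/
/-! From `log (1 - t) ≤ -t - t ^ 2 / 2` with `t = sin² y` one gets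
`|cos y| ≤ exp (-(sin² y / 2 + sin⁴ y / 4)) = exp ((12 cos 2y - cos 4y - 11) / 32)`.
Over the angles `m θ` with `1 ≤ m ≤ 3n + 2`, `3 ∤ m`, the cosine sums are Dirichlet-kernel sums
minus those over the multiples of `3`, hence bounded through `1 / (2 sin jθ)`, `j = 1, 2, 3`
(the multiples of `3` at `4θ` only by `n`). Finally `sin x > x - x³ / 6` and `p ≤ θ ≤ π / 6` give
`sin jθ ≥ j p (1 - 3p² / 2)` for `p = π / (6n + 4)` and `j ≤ 3`. -/

open Finset Real

lemma one_sub_le_exp_neg_add_sq_div_two {t : ℝ} (h0 : 0 ≤ t) (h1 : t ≤ 1) :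
    1 - t ≤ exp (-(t + t ^ 2 / 2)) := by
  rcases h1.eq_or_lt with rfl | h1
  · simpa using (exp_pos _).le
  have hlog : t + t ^ 2 / 2 ≤ -log (1 - t) := by
    have hs := hasSum_pow_div_log_of_abs_lt_one (x := t) (by rwa [abs_of_nonneg h0])
    have := sum_le_hasSum (range 2) (fun i _ ↦ by positivity) hs
    norm_num [sum_range_succ] at this
    linarith
  calc 1 - t = exp (log (1 - t)) := (exp_log (by linarith)).symm
    _ ≤ exp (-(t + t ^ 2 / 2)) := exp_le_exp.mpr (by linarith)

lemma abs_cos_le_exp (y : ℝ) :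
    |cos y| ≤ exp ((12 * cos (2 * y) - cos (4 * y) - 11) / 32) := by
  have hexp : 2 * ((12 * cos (2 * y) - cos (4 * y) - 11) / 32) =
      -(sin y ^ 2 + (sin y ^ 2) ^ 2 / 2) := by
    rw [show 4 * y = 2 * (2 * y) by ring, cos_two_mul (2 * y), cos_two_mul, cos_sq']
    ring
  have hsq : |cos y| ^ 2 ≤ exp ((12 * cos (2 * y) - cos (4 * y) - 11) / 32) ^ 2 := by
    rw [sq_abs, ← exp_nat_mul, Nat.cast_ofNat, hexp, cos_sq']
    exact one_sub_le_exp_neg_add_sq_div_two (sq_nonneg _) (sin_sq_le_one y)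
  exact (pow_le_pow_iff_left₀ (abs_nonneg _) (exp_pos _).le two_ne_zero).mp hsq

lemma two_mul_sin_mul_sum_cos (y : ℝ) (N : ℕ) :
    2 * sin y * ∑ m ∈ range N, cos ((m + 1) * (2 * y)) = sin ((2 * N + 1) * y) - sin y := by
  induction N with
  | zero => simp
  | succ N ih =>
    rw [sum_range_succ, mul_add, ih, two_mul_sin_mul_cos,
      show y - (N + 1) * (2 * y) = -((2 * N + 1) * y) by ring, sin_neg]
    push_cast
    ring_nf

lemma abs_sum_cos_add_half_le {y : ℝ} (hy : 0 < sin y) (N : ℕ) :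
    |∑ m ∈ range N, cos ((m + 1) * (2 * y)) + 1 / 2| ≤ 1 / (2 * sin y) := by
  rw [le_div_iff₀ (by positivity), ← abs_of_pos (by positivity : 0 < 2 * sin y), ← abs_mul]
  calc |(∑ m ∈ range N, cos ((m + 1) * (2 * y)) + 1 / 2) * (2 * sin y)|
      = |sin ((2 * N + 1) * y)| := by
        congr 1
        linear_combination two_mul_sin_mul_sum_cos y N
    _ ≤ 1 := abs_sin_le_one _

lemma sum_range_three_mul_add_two {M : Type*} [AddCommMonoid M] (f : ℕ → M) (K : ℕ) :
    ∑ m ∈ range (3 * K + 2), f m =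
      ∑ k ∈ range (K + 1), (f (3 * k) + f (3 * k + 1)) + ∑ k ∈ range K, f (3 * k + 2) := by
  induction K with
  | zero => simp [sum_range_succ]
  | succ K ih =>
    rw [show 3 * (K + 1) + 2 = 3 * K + 2 + 1 + 1 + 1 by ring, sum_range_succ, sum_range_succ,
      sum_range_succ, ih, sum_range_succ (fun k ↦ f (3 * k) + f (3 * k + 1)) (K + 1),
      sum_range_succ (fun k ↦ f (3 * k + 2)) K]
    rw [show 3 * K + 2 + 1 = 3 * (K + 1) by ring, show 3 * K + 2 + 1 + 1 = 3 * (K + 1) + 1 by ring]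
    abel

noncomputable def cosSumCoprimeThree (n : ℕ) (x : ℝ) : ℝ :=
  ∑ k ∈ range (n + 1), (cos ((3 * k + 1) * x) + cos ((3 * k + 2) * x))

lemma cosSumCoprimeThree_eq (n : ℕ) (x : ℝ) :
    cosSumCoprimeThree n x =
      ∑ m ∈ range (3 * n + 2), cos ((m + 1) * x) - ∑ k ∈ range n, cos ((k + 1) * (3 * x)) := by
  have hthird : ∑ k ∈ range n, cos (((3 * k + 2 : ℕ) + 1) * x) =
      ∑ k ∈ range n, cos ((k + 1) * (3 * x)) :=
    sum_congr rfl fun k _ ↦ by push_cast; ring_nf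
  rw [sum_range_three_mul_add_two, hthird, add_sub_cancel_right, cosSumCoprimeThree]
  refine sum_congr rfl fun k _ ↦ ?_
  push_cast
  ring_nf

lemma cosSumCoprimeThree_two_mul_le {y : ℝ} (h1 : 0 < sin y) (h3 : 0 < sin (3 * y)) (n : ℕ) :
    cosSumCoprimeThree n (2 * y) ≤ 1 / (2 * sin y) + 1 / (2 * sin (3 * y)) := by
  have hA := (abs_le.mp (abs_sum_cos_add_half_le h1 (3 * n + 2))).2
  have hB := (abs_le.mp (abs_sum_cos_add_half_le h3 n)).1
  rw [cosSumCoprimeThree_eq, show 3 * (2 * y) = 2 * (3 * y) by ring]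
  linarith

lemma neg_le_cosSumCoprimeThree_two_mul {y : ℝ} (h1 : 0 < sin y) (n : ℕ) :
    -(1 / 2 + 1 / (2 * sin y) + n) ≤ cosSumCoprimeThree n (2 * y) := by
  have hA := (abs_le.mp (abs_sum_cos_add_half_le h1 (3 * n + 2))).1
  have hB : ∑ k ∈ range n, cos ((k + 1) * (3 * (2 * y))) ≤ n := by
    simpa using sum_le_card_nsmul (range n) _ 1 fun k _ ↦ cos_le_one _
  rw [cosSumCoprimeThree_eq]
  linarith

lemma abs_prod_cos_le_exp (n : ℕ) (θ : ℝ) :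
    |∏ k ∈ range (n + 1), (cos ((3 * k + 1) * θ) * cos ((3 * k + 2) * θ))| ≤
      exp ((12 * cosSumCoprimeThree n (2 * θ) - cosSumCoprimeThree n (4 * θ) - 22 * (n + 1))
        / 32) := by
  have hsum :
      (12 * cosSumCoprimeThree n (2 * θ) - cosSumCoprimeThree n (4 * θ) - 22 * (n + 1)) / 32 =
      ∑ k ∈ range (n + 1),
        ((12 * cos (2 * ((3 * k + 1) * θ)) - cos (4 * ((3 * k + 1) * θ)) - 11) / 32 +
          (12 * cos (2 * ((3 * k + 2) * θ)) - cos (4 * ((3 * k + 2) * θ)) - 11) / 32) := by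
    rw [show (22 : ℝ) * (n + 1) = ∑ k ∈ range (n + 1), 22 by simp; ring]
    simp only [cosSumCoprimeThree, mul_sum, ← sum_sub_distrib, sum_div]
    refine sum_congr rfl fun k _ ↦ ?_
    ring_nf
  rw [hsum, exp_sum, abs_prod]
  refine prod_le_prod (fun k _ ↦ abs_nonneg _) fun k _ ↦ ?_
  rw [abs_mul, exp_add]
  exact mul_le_mul (abs_cos_le_exp _) (abs_cos_le_exp _) (abs_nonneg _) (exp_pos _).le

lemma mul_one_sub_le_sin_mul {j p θ : ℝ} (hj : 0 < j) (hj3 : j ≤ 3) (hp : 0 < p) (hpθ : p ≤ θ)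
    (hθ : j * θ ≤ π / 2) : j * p * (1 - 3 / 2 * p ^ 2) ≤ sin (j * θ) := by
  have hjp : 0 < j * p := mul_pos hj hp
  have hmono : sin (j * p) ≤ sin (j * θ) :=
    sin_le_sin_of_le_of_le_pi_div_two (by linarith [pi_pos]) hθ (by gcongr)
  have hcube := sin_gt_sub_cube hjp
  have hj2 : j ^ 2 ≤ 9 := by nlinarith
  nlinarith [mul_le_mul_of_nonneg_left hj2 (by positivity : 0 ≤ j * p * p ^ 2)]

lemma inv_sin_combination_le {p θ : ℝ} (hp : 0 < p) (hpθ : p ≤ θ) (hθ : θ ≤ π / 6) :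
    12 * (1 / (2 * sin θ) + 1 / (2 * sin (3 * θ))) + 1 / (2 * sin (2 * θ)) ≤
      33 / (4 * p * (1 - 3 / 2 * p ^ 2)) := by
  have hD : 0 < 1 - 3 / 2 * p ^ 2 := by nlinarith [pi_lt_four]
  have h1 := mul_one_sub_le_sin_mul one_pos (by norm_num) hp hpθ (by linarith)
  have h2 := mul_one_sub_le_sin_mul two_pos (by norm_num) hp hpθ (by linarith)
  have h3 := mul_one_sub_le_sin_mul three_pos le_rfl hp hpθ (by linarith)
  rw [one_mul, one_mul] at h1
  calc 12 * (1 / (2 * sin θ) + 1 / (2 * sin (3 * θ))) + 1 / (2 * sin (2 * θ))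
      ≤ 12 * (1 / (2 * (p * (1 - 3 / 2 * p ^ 2))) + 1 / (2 * (3 * p * (1 - 3 / 2 * p ^ 2)))) +
          1 / (2 * (2 * p * (1 - 3 / 2 * p ^ 2))) := by gcongr
    _ = 33 / (4 * p * (1 - 3 / 2 * p ^ 2)) := by field_simp; ring

theorem borwein_product_bound_small_general (n : ℕ) (θ : ℝ)
    (h1 : Real.pi / (6 * n + 4) ≤ θ) (h2 : θ ≤ Real.pi / 6) :
    |∏ k ∈ Finset.range (n + 1),
        (Real.cos ((3 * k + 1) * θ) * Real.cos ((3 * k + 2) * θ))| ≤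
      Real.exp (-(42 * n + 43) / 64 +
        33 * (6 * n + 4) /
          (128 * Real.pi * (1 - 6 * Real.pi ^ 2 / (12 * n + 8) ^ 2))) := by
  set p := π / (6 * n + 4) with hp_def
  have hp : 0 < p := by positivity
  have hθ : 0 < θ := hp.trans_le h1
  have hsin (j : ℝ) (hj : 0 < j) (hj3 : j ≤ 3) : 0 < sin (j * θ) :=
    sin_pos_of_pos_of_lt_pi (by positivity) (by nlinarith [pi_pos])
  have hs1 : 0 < sin θ := by simpa using hsin 1 one_pos (by norm_num)
  have hupper := cosSumCoprimeThree_two_mul_le hs1 (hsin 3 three_pos le_rfl) n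
  have hlower := neg_le_cosSumCoprimeThree_two_mul (hsin 2 two_pos (by norm_num)) n
  rw [← mul_assoc, show (2 : ℝ) * 2 = 4 by norm_num] at hlower
  have hcomb := inv_sin_combination_le hp h1 h2
  refine (abs_prod_cos_le_exp n θ).trans (exp_le_exp.mpr ?_)
  have htarget : 33 * (6 * n + 4) / (128 * π * (1 - 6 * π ^ 2 / (12 * n + 8) ^ 2)) =
      33 / (4 * p * (1 - 3 / 2 * p ^ 2)) / 32 := by
    have hdenom : 1 - 6 * π ^ 2 / (12 * n + 8) ^ 2 = 1 - 3 / 2 * p ^ 2 := by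
      rw [hp_def]
      field_simp
      ring
    rw [hdenom, hp_def]
    field_simp
    norm_num
  rw [htarget]
  linarith

theorem borwein_product_bound_small (n : ℕ) (hn : 1 ≤ n) (θ : ℝ)
    (h1 : Real.pi / (6 * n + 4) ≤ θ) (h2 : θ ≤ Real.pi / 6) :
    |∏ k ∈ Finset.range (n + 1),
        (Real.cos ((3 * k + 1) * θ) * Real.cos ((3 * k + 2) * θ))| ≤
      Real.exp (-(42 * n + 43) / 64 +
        33 * (6 * n + 4) /
          (128 * Real.pi * (1 - 6 * Real.pi ^ 2 / (12 * n + 8) ^ 2))) :=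
  borwein_product_bound_small_general n θ h1 h2
end

section
/- For all real θ with π/6 ≤ θ ≤ π/2 and every positive integer n, |∏_{k=0}^{n} cos((3k+1)θ) cos((3k+2)θ)| ≤ exp(−(3/16)n − 1/32). -/
open Finset

lemma abs_cos_le_exp_s18 (x : ℝ) : |Real.cos x| ≤ Real.exp (-(Real.sin x ^ 2 / 2)) := by
  have h1 : Real.cos x ^ 2 ≤ Real.exp (-(Real.sin x ^ 2)) := by
    have h := Real.add_one_le_exp (-(Real.sin x ^ 2))
    have h2 := Real.sin_sq_add_cos_sq x
    nlinarith
  have h2 : Real.exp (-(Real.sin x ^ 2)) = Real.exp (-(Real.sin x ^ 2 / 2)) ^ 2 := by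
    conv_rhs => rw [sq, ← Real.exp_add]
    ring_nf
  nlinarith [abs_nonneg (Real.cos x), sq_abs (Real.cos x),
    Real.exp_pos (-(Real.sin x ^ 2 / 2))]

lemma four_sin_sq (θ A : ℝ) (h1 : Real.pi / 6 ≤ θ) (h2 : θ ≤ Real.pi / 2) :
    7/8 ≤ Real.sin A ^ 2 + Real.sin (A + θ) ^ 2 + Real.sin (A + 3*θ) ^ 2
      + Real.sin (A + 4*θ) ^ 2 := by
  have hpi := Real.pi_pos
  have hc0 : 0 ≤ Real.cos θ := Real.cos_nonneg_of_mem_Icc ⟨by linarith, h2⟩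
  have hcle : Real.cos θ ≤ Real.sqrt 3 / 2 := by
    rw [← Real.cos_pi_div_six]
    exact Real.cos_le_cos_of_nonneg_of_le_pi (by positivity) (by linarith) h1
  have h3 : Real.sqrt 3 ^ 2 = 3 := Real.sq_sqrt (by norm_num)
  have hcsq : Real.cos θ ^ 2 ≤ 3/4 := by nlinarith
  have key : |Real.cos θ * Real.cos (3*θ)| ≤ 9/16 := by
    rw [Real.cos_three_mul, abs_le]
    constructor <;> nlinarith [sq_nonneg (Real.cos θ), sq_nonneg (2 * Real.cos θ ^ 2 - 3/4)]
  have e1 : Real.cos (2*A + 8*θ) + Real.cos (2*A) = 2 * Real.cos (2*A + 4*θ) * Real.cos (4*θ) := by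
    rw [Real.cos_add_cos]; ring_nf
  have e2 : Real.cos (2*A + 6*θ) + Real.cos (2*A + 2*θ) = 2 * Real.cos (2*A + 4*θ) * Real.cos (2*θ) := by
    rw [Real.cos_add_cos]; ring_nf
  have e3 : Real.cos (4*θ) + Real.cos (2*θ) = 2 * Real.cos (3*θ) * Real.cos θ := by
    rw [Real.cos_add_cos]; ring_nf
  have habs : |Real.cos (2*A + 4*θ)| ≤ 1 := Real.abs_cos_le_one _
  have hprod : |Real.cos (2*A + 4*θ) * (Real.cos θ * Real.cos (3*θ))| ≤ 9/16 := by
    rw [abs_mul]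
    calc |Real.cos (2*A + 4*θ)| * |Real.cos θ * Real.cos (3*θ)| ≤ 1 * (9/16) :=
          mul_le_mul habs key (abs_nonneg _) (by norm_num)
      _ = 9/16 := by norm_num
  have e4 : Real.cos (2*A+4*θ) * Real.cos (4*θ) + Real.cos (2*A+4*θ) * Real.cos (2*θ)
      = 2 * (Real.cos (2*A+4*θ) * (Real.cos θ * Real.cos (3*θ))) := by
    linear_combination Real.cos (2*A+4*θ) * e3
  have hb : Real.cos (2*A) + Real.cos (2*A+2*θ) + Real.cos (2*A+6*θ) + Real.cos (2*A+8*θ) ≤ 9/4 := by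
    have h4 := le_abs_self (Real.cos (2*A + 4*θ) * (Real.cos θ * Real.cos (3*θ)))
    linarith [hprod, h4, e1, e2, e4]
  have s1 : Real.sin A ^ 2 = 1/2 - Real.cos (2*A)/2 := by
    rw [Real.sin_sq, Real.cos_sq]; ring_nf
  have s2 : Real.sin (A + θ) ^ 2 = 1/2 - Real.cos (2*A+2*θ)/2 := by
    rw [Real.sin_sq, Real.cos_sq]; ring_nf
  have s3 : Real.sin (A + 3*θ) ^ 2 = 1/2 - Real.cos (2*A+6*θ)/2 := by
    rw [Real.sin_sq, Real.cos_sq]; ring_nf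
  have s4 : Real.sin (A + 4*θ) ^ 2 = 1/2 - Real.cos (2*A+8*θ)/2 := by
    rw [Real.sin_sq, Real.cos_sq]; ring_nf
  rw [s1, s2, s3, s4]
  linarith

theorem borwein_product_bound_large (n : ℕ) (hn : 1 ≤ n) (θ : ℝ)
    (h1 : Real.pi / 6 ≤ θ) (h2 : θ ≤ Real.pi / 2) :
    |∏ k ∈ Finset.range (n + 1),
        (Real.cos ((3 * k + 1) * θ) * Real.cos ((3 * k + 2) * θ))| ≤
      Real.exp (-(3 / 16) * n - 1 / 32) := by
  set s : ℕ → ℝ := fun k => Real.sin ((3*k+1)*θ) ^ 2 + Real.sin ((3*k+2)*θ) ^ 2 with hs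
  have hstep : ∀ k : ℕ, |Real.cos ((3*(k:ℝ)+1)*θ) * Real.cos ((3*(k:ℝ)+2)*θ)|
      ≤ Real.exp (-(s k / 2)) := by
    intro k
    rw [abs_mul]
    calc |Real.cos ((3*(k:ℝ)+1)*θ)| * |Real.cos ((3*(k:ℝ)+2)*θ)|
        ≤ Real.exp (-(Real.sin ((3*(k:ℝ)+1)*θ) ^ 2 / 2)) *
          Real.exp (-(Real.sin ((3*(k:ℝ)+2)*θ) ^ 2 / 2)) :=
          mul_le_mul (abs_cos_le_exp_s18 _) (abs_cos_le_exp_s18 _) (abs_nonneg _) (Real.exp_pos _).le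
      _ = Real.exp (-(s k / 2)) := by
          rw [← Real.exp_add]; simp only [hs]; ring_nf
  have hpair : ∀ k : ℕ, 7/8 ≤ s k + s (k+1) := by
    intro k
    have h4 := four_sin_sq θ ((3*(k:ℝ)+1)*θ) h1 h2
    have eA : (3*(k:ℝ)+1)*θ + θ = (3*(k:ℝ)+2)*θ := by ring
    have eB : (3*(k:ℝ)+1)*θ + 3*θ = (3*((k:ℝ)+1)+1)*θ := by ring
    have eC : (3*(k:ℝ)+1)*θ + 4*θ = (3*((k:ℝ)+1)+2)*θ := by ring
    rw [eA, eB, eC] at h4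
    simp only [hs]
    push_cast
    linarith
  have hsnn : ∀ k : ℕ, 0 ≤ s k := by
    intro k; simp only [hs]; positivity
  set T := ∑ k ∈ Finset.range (n+1), s k with hT
  have hsum : ∑ k ∈ Finset.range n, (s k + s (k+1)) = (T - s n) + (T - s 0) := by
    rw [Finset.sum_add_distrib]
    have e1 := Finset.sum_range_succ s n
    have e2 := Finset.sum_range_succ' s n
    rw [hT]
    linarith
  have hlow : (n:ℝ) * (7/8) ≤ ∑ k ∈ Finset.range n, (s k + s (k+1)) := by
    have := Finset.card_nsmul_le_sum (Finset.range n) (fun k => s k + s (k+1)) (7/8)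
      (fun i _ => hpair i)
    simpa using this
  have hn' : (1:ℝ) ≤ n := by exact_mod_cast hn
  have hTlow : 3/8 * n + 1/16 ≤ T := by
    have h0 := hsnn 0
    have hnn := hsnn n
    linarith
  calc |∏ k ∈ Finset.range (n + 1),
        (Real.cos ((3 * k + 1) * θ) * Real.cos ((3 * k + 2) * θ))|
      = ∏ k ∈ Finset.range (n + 1), |Real.cos ((3 * k + 1) * θ) * Real.cos ((3 * k + 2) * θ)| :=
        Finset.abs_prod _ _
    _ ≤ ∏ k ∈ Finset.range (n + 1), Real.exp (-(s k / 2)) :=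
        Finset.prod_le_prod (fun i _ => abs_nonneg _) (fun i _ => hstep i)
    _ = Real.exp (∑ k ∈ Finset.range (n + 1), -(s k / 2)) := (Real.exp_sum _ _).symm
    _ ≤ Real.exp (-(3 / 16) * n - 1 / 32) := by
        apply Real.exp_le_exp.mpr
        have : ∑ k ∈ Finset.range (n + 1), -(s k / 2) = -(T/2) := by
          rw [hT, Finset.sum_neg_distrib, ← Finset.sum_div]
        rw [this]
        linarith
end
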